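/- Let S, X₁, X₂ be finite sets, let κ₁ be a channel from S to X₁ and κ₂ a channel from S to X₂, and suppose κ₁ is a garbling of κ₂, i.e. κ₁ = λ·κ₂ for some channel λ from X₂ to X₁. Then for every probability distribution p on S, every finite action set A, and every utility function u : A × S → ℝ, the optimal expected utility satisfies U(p,u,κ₁) ≤ U(p,u,κ₂). -/

import Mathlib

open Finset

/-- A probability distribution on a finite set. -/
def IsDist {S : Type} [Fintype S] (p : S → ℝ) : Prop :=
  (∀ s, 0 ≤ p s) ∧ ∑ s, p s = 1

/-- A channel from `S` to `X`: a column-stochastic matrix. -/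
def IsChannel {S X : Type} [Fintype S] [Fintype X] (κ : X → S → ℝ) : Prop :=
  (∀ x s, 0 ≤ κ x s) ∧ ∀ s, ∑ x, κ x s = 1

/-- `κ₁` is a garbling of `κ₂` (the Blackwell order `κ₁ ⪯ κ₂`). -/
def IsGarbling {S X₁ X₂ : Type} [Fintype S] [Fintype X₁] [Fintype X₂]
    (κ₁ : X₁ → S → ℝ) (κ₂ : X₂ → S → ℝ) : Prop :=
  ∃ lam : X₁ → X₂ → ℝ, IsChannel lam ∧ ∀ x₁ s, κ₁ x₁ s = ∑ x₂, lam x₁ x₂ * κ₂ x₂ s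

/-- Optimal expected utility: maximum over decision rules `d : X → A`. -/
noncomputable def optUtility {S X A : Type} [Fintype S] [Fintype X] [Fintype A]
    (p : S → ℝ) (u : A × S → ℝ) (κ : X → S → ℝ) : ℝ :=
  ⨆ d : X → A, ∑ s, ∑ x, p s * κ x s * u (d x, s)

/-- Mutual information between input (with distribution `p`) and output of channel `κ`;
terms with `κ x s = 0` are taken to be `0`. -/
noncomputable def mutualInfo {S X : Type} [Fintype S] [Fintype X]
    (p : S → ℝ) (κ : X → S → ℝ) : ℝ :=
  ∑ s, ∑ x, if κ x s = 0 then 0 else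
    p s * κ x s * Real.log (κ x s / ∑ s', p s' * κ x s')

/-- Channel composition: `(κ·λ) x s = ∑ t, κ x t * λ t s`. -/
def chanComp {S T X : Type} [Fintype S] [Fintype T] [Fintype X]
    (κ : X → T → ℝ) (lam : T → S → ℝ) : X → S → ℝ :=
  fun x s => ∑ t, κ x t * lam t s

/-- Marginal on `S` of a joint distribution on `S × X₁ × X₂`. -/
noncomputable def margS3 {S X₁ X₂ : Type} [Fintype S] [Fintype X₁] [Fintype X₂]
    (P : S × X₁ × X₂ → ℝ) (s : S) : ℝ := ∑ x₁, ∑ x₂, P (s, x₁, x₂)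

/-- The channel `X₁ ← S` of conditional probabilities `P(X₁ = x₁ | S = s)`. -/
noncomputable def chan1of3 {S X₁ X₂ : Type} [Fintype S] [Fintype X₁] [Fintype X₂]
    (P : S × X₁ × X₂ → ℝ) (x₁ : X₁) (s : S) : ℝ :=
  (∑ x₂, P (s, x₁, x₂)) / margS3 P s

/-- The channel `X₂ ← S` of conditional probabilities `P(X₂ = x₂ | S = s)`. -/
noncomputable def chan2of3 {S X₁ X₂ : Type} [Fintype S] [Fintype X₁] [Fintype X₂]
    (P : S × X₁ × X₂ → ℝ) (x₂ : X₂) (s : S) : ℝ :=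
  (∑ x₁, P (s, x₁, x₂)) / margS3 P s

/-- Pushforward of a joint distribution on `S × X₁ × X₂` along `f : S → S'`. -/
noncomputable def push3 {S S' X₁ X₂ : Type} [Fintype S] [Fintype X₁] [Fintype X₂]
    [DecidableEq S'] (f : S → S') (P : S × X₁ × X₂ → ℝ) : S' × X₁ × X₂ → ℝ :=
  fun q => ∑ s ∈ Finset.univ.filter (fun s => f s = q.1), P (s, q.2.1, q.2.2)

/-!
Composing a decision rule for `κ₁ = λ·κ₂` with the garbling `λ` gives a randomized decision
rule for `κ₂`. Its expected utility is, for each observation `x₂`, a convex combination of the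
values of actions, hence is bounded by the value of the best action at `x₂`; and choosing the
best action separately at each `x₂` is a decision rule for `κ₂`.
-/

theorem Finset.sum_mul_le_of_sum_eq_one {ι R : Type*} [Semiring R] [PartialOrder R]
    [IsOrderedRing R] {s : Finset ι} {w f : ι → R} {M : R}
    (hw : ∀ i ∈ s, 0 ≤ w i) (hw_sum : ∑ i ∈ s, w i = 1) (hf : ∀ i ∈ s, f i ≤ M) :
    ∑ i ∈ s, w i * f i ≤ M :=
  calc ∑ i ∈ s, w i * f i ≤ ∑ i ∈ s, w i * M :=
        Finset.sum_le_sum fun i hi => mul_le_mul_of_nonneg_left (hf i hi) (hw i hi)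
    _ = M := by rw [← Finset.sum_mul, hw_sum, one_mul]

section ActionValue

variable {S X A : Type} [Fintype S]

/-- `P(x)` times the posterior expected utility of action `a` after observing `x`. -/
def actionValue (p : S → ℝ) (u : A × S → ℝ) (κ : X → S → ℝ) (x : X) (a : A) : ℝ :=
  ∑ s, p s * κ x s * u (a, s)

theorem sum_sum_eq_sum_actionValue [Fintype X] (p : S → ℝ) (u : A × S → ℝ)
    (κ : X → S → ℝ) (d : X → A) :
    ∑ s, ∑ x, p s * κ x s * u (d x, s) = ∑ x, actionValue p u κ x (d x) :=
  Finset.sum_comm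

theorem optUtility_eq_sum_iSup_actionValue [Fintype X] [Fintype A] [Nonempty A]
    (p : S → ℝ) (u : A × S → ℝ) (κ : X → S → ℝ) :
    optUtility p u κ = ∑ x, ⨆ a, actionValue p u κ x a := by
  choose dBest hdBest using fun x => exists_eq_ciSup_of_finite (f := actionValue p u κ x)
  unfold optUtility
  apply le_antisymm
  · refine ciSup_le fun d => ?_
    rw [sum_sum_eq_sum_actionValue]
    exact Finset.sum_le_sum fun x _ => le_ciSup (Finite.bddAbove_range _) (d x)
  · calc ∑ x, ⨆ a, actionValue p u κ x a = ∑ x, actionValue p u κ x (dBest x) := by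
          simp only [hdBest]
      _ = ∑ s, ∑ x, p s * κ x s * u (dBest x, s) := (sum_sum_eq_sum_actionValue p u κ dBest).symm
      _ ≤ ⨆ d : X → A, ∑ s, ∑ x, p s * κ x s * u (d x, s) :=
          le_ciSup (f := fun d : X → A => ∑ s, ∑ x, p s * κ x s * u (d x, s))
            (Finite.bddAbove_range _) dBest

theorem actionValue_chanComp {Y : Type} [Fintype X] [Fintype Y] (p : S → ℝ) (u : A × S → ℝ)
    (lam : X → Y → ℝ) (κ : Y → S → ℝ) (x : X) (a : A) :
    actionValue p u (chanComp lam κ) x a = ∑ y, lam x y * actionValue p u κ y a := by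
  simp only [actionValue, chanComp, Finset.sum_mul, Finset.mul_sum]
  rw [Finset.sum_comm]
  exact Finset.sum_congr rfl fun _ _ => Finset.sum_congr rfl fun _ _ => by ring

end ActionValue

theorem garbling_le_optUtility {S X₁ X₂ : Type} [Fintype S] [Fintype X₁] [Fintype X₂]
    (κ₁ : X₁ → S → ℝ) (κ₂ : X₂ → S → ℝ)
    (hgarb : IsGarbling κ₁ κ₂) :
    ∀ p : S → ℝ, IsDist p →
      ∀ (A : Type) [Fintype A] [Nonempty A] (u : A × S → ℝ),
        optUtility p u κ₁ ≤ optUtility p u κ₂ := by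
  intro p _ A _ _ u
  obtain ⟨lam, ⟨hlam_nonneg, hlam_sum⟩, hκ⟩ := hgarb
  have hκ₁ : κ₁ = chanComp lam κ₂ := funext₂ hκ
  rw [optUtility_eq_sum_iSup_actionValue p u κ₂]
  refine ciSup_le fun d => ?_
  calc ∑ s, ∑ x₁, p s * κ₁ x₁ s * u (d x₁, s)
      = ∑ x₁, ∑ x₂, lam x₁ x₂ * actionValue p u κ₂ x₂ (d x₁) := by
        simp only [hκ₁, sum_sum_eq_sum_actionValue, actionValue_chanComp]
    _ = ∑ x₂, ∑ x₁, lam x₁ x₂ * actionValue p u κ₂ x₂ (d x₁) := Finset.sum_comm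
    _ ≤ ∑ x₂, ⨆ a, actionValue p u κ₂ x₂ a :=
        Finset.sum_le_sum fun x₂ _ => Finset.sum_mul_le_of_sum_eq_one
          (fun x₁ _ => hlam_nonneg x₁ x₂) (hlam_sum x₂)
          fun x₁ _ => le_ciSup (Finite.bddAbove_range _) (d x₁)
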